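/- arXiv:1901.07936 — 5 statements merged into one kernel-verified Lean document; each statement's English description precedes it below -/
import Mathlib

section
/- Let Σ be a spacelike hypersurface of M×ℝ with no horizontal points, with Riemannian unit normal N, angle function θ satisfying 2θ² > 1, and Lorentzian unit normal N_L = μΦ(N) where μ = −(2θ²−1)^{−1/2}. Then the Lorentzian and Riemannian shape operators satisfy ⟨A_L X, Y⟩_L = μ⟨AX,Y⟩ for all X,Y tangent to Σ, and the mean curvatures satisfy H_L + μH = μ(1−μ²)⟨AT,T⟩ with T = ∇ξ/‖∇ξ‖. -/
open scoped RealInnerProductSpace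

/-!
`Φ` is the musical isomorphism between the two metrics: `⟨X, Φ Y⟩_L = ⟨X, Y⟩`. Hence
`⟨W, N_L⟩_L = μ⟨W, N⟩` for every `W`, and comparing the two Gauss formulas gives
`⟨A_L X, Y⟩_L = μ⟨AX, Y⟩`. The frame `X₁, …, Xₙ, T` is orthonormal and, since all `Xᵢ` but `T`
are horizontal, also `⟨·,·⟩_L`-orthogonal, with `⟨Xᵢ, Xᵢ⟩_L = 1` and
`⟨T, T⟩_L = 1 - 2⟨T, ∂_t⟩² = 2θ² - 1 = μ⁻²`. So the diagonal entries of `A_L` in this frame are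
`μ⟨AXᵢ, Xᵢ⟩` and `μ³⟨AT, T⟩`, and the relation between the traces follows.
-/

namespace LorentzProduct

variable {E : Type*} [NormedAddCommGroup E] [InnerProductSpace ℝ E]

def lorentzInner (t X Y : E) : ℝ := ⟪X, Y⟫ - 2 * ⟪X, t⟫ * ⟪Y, t⟫

def timeFlip (t X : E) : E := X - (2 * ⟪X, t⟫) • t

lemma lorentzInner_timeFlip {t : E} (ht : ‖t‖ = 1) (X Y : E) :
    lorentzInner t X (timeFlip t Y) = ⟪X, Y⟫ := by
  have htt : ⟪t, t⟫ = 1 := by rw [real_inner_self_eq_norm_sq, ht, one_pow]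
  simp only [lorentzInner, timeFlip, inner_sub_right, real_inner_smul_right, htt,
    real_inner_comm t]
  ring

lemma lorentzInner_smul_right (t X Y : E) (a : ℝ) :
    lorentzInner t X (a • Y) = a * lorentzInner t X Y := by
  simp only [lorentzInner, real_inner_smul_right, real_inner_smul_left]
  ring

lemma lorentzInner_sum_smul_left {ι : Type*} [Fintype ι] (t : E) (X : ι → E) (c : ι → ℝ)
    (Y : E) : lorentzInner t (∑ k, c k • X k) Y = ∑ k, c k * lorentzInner t (X k) Y := by
  simp only [lorentzInner, sum_inner, real_inner_smul_left, Finset.sum_mul, Finset.mul_sum,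
    ← Finset.sum_sub_distrib]
  exact Finset.sum_congr rfl fun k _ => by ring

lemma lorentzInner_sum_smul_left_of_pairwise {ι : Type*} [Fintype ι] {t : E} {X : ι → E}
    (hX : ∀ k i, k ≠ i → lorentzInner t (X k) (X i) = 0) (c : ι → ℝ) (i : ι) :
    lorentzInner t (∑ k, c k • X k) (X i) = c i * lorentzInner t (X i) (X i) := by
  rw [lorentzInner_sum_smul_left]
  exact Finset.sum_eq_single i (fun k _ hki => by rw [hX k i hki, mul_zero])
    (fun hi => absurd (Finset.mem_univ i) hi)

section Frame

variable {ι : Type*} {t : E} {X : ι → E} (hX : Orthonormal ℝ X) {j : ι}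
  (hXt : ∀ i ≠ j, ⟪X i, t⟫ = 0)
include hX hXt

lemma lorentzInner_eq_zero_of_orthonormal {k i : ι} (hki : k ≠ i) :
    lorentzInner t (X k) (X i) = 0 := by
  have hprod : ⟪X k, t⟫ * ⟪X i, t⟫ = 0 := by
    rcases eq_or_ne k j with rfl | hk
    · rw [hXt i hki.symm, mul_zero]
    · rw [hXt k hk, zero_mul]
  rw [lorentzInner, hX.inner_eq_zero hki, mul_assoc, hprod, mul_zero, sub_zero]

lemma lorentzInner_self_of_orthonormal {i : ι} (hi : i ≠ j) : lorentzInner t (X i) (X i) = 1 := by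
  rw [lorentzInner, real_inner_self_eq_norm_sq, hX.1 i, hXt i hi]
  ring

end Frame

lemma inner_sq_of_eq_inv_sqrt_smul {t N T : E} {θ : ℝ} (ht : ‖t‖ = 1) (hθ : ⟪N, t⟫ = θ)
    (hT : T = (√(1 - θ ^ 2))⁻¹ • (t - θ • N)) (hT0 : T ≠ 0) : ⟪T, t⟫ ^ 2 = 1 - θ ^ 2 := by
  have hs : √(1 - θ ^ 2) ≠ 0 := by
    rintro hs
    rw [hs, inv_zero, zero_smul] at hT
    exact hT0 hT
  have hpos : 0 < 1 - θ ^ 2 := Real.sqrt_ne_zero'.mp hs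
  rw [hT, real_inner_smul_left, inner_sub_left, real_inner_smul_left, hθ,
    real_inner_self_eq_norm_sq, ht, mul_pow, inv_pow, Real.sq_sqrt hpos.le]
  field_simp

lemma neg_inv_sqrt_sq_mul {d : ℝ} (hd : 0 < d) : (-(√d)⁻¹) ^ 2 * d = 1 := by
  rw [neg_sq, inv_pow, Real.sq_sqrt hd.le, inv_mul_cancel₀ hd.ne']

end LorentzProduct

open LorentzProduct

theorem stmt_4_general {E : Type*} [NormedAddCommGroup E] [InnerProductSpace ℝ E] {n : ℕ}
    (t N : E) (ht : ‖t‖ = 1)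
    (θ : ℝ) (hθ : θ = ⟪N, t⟫) (hsp : 2 * θ ^ 2 > 1)
    (μ : ℝ) (hμ : μ = -(Real.sqrt (2 * θ ^ 2 - 1))⁻¹)
    (Φ : E → E) (hΦ : ∀ X, Φ X = X - (2 * ⟪X, t⟫) • t)
    (L : E → E → ℝ) (hL : ∀ X Y, L X Y = ⟪X, Y⟫ - 2 * ⟪X, t⟫ * ⟪Y, t⟫)
    (NL : E) (hNL : NL = μ • Φ N)
    (A AL : E →ₗ[ℝ] E) (Γ : E → E → E)
    (hAΓ : ∀ X Y, ⟪X, N⟫ = 0 → ⟪Y, N⟫ = 0 → ⟪A X, Y⟫ = ⟪Γ X Y, N⟫)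
    (hALΓ : ∀ X Y, ⟪X, N⟫ = 0 → ⟪Y, N⟫ = 0 → L (AL X) Y = L (Γ X Y) NL)
    (T : E) (hT : T = (Real.sqrt (1 - θ ^ 2))⁻¹ • (t - θ • N))
    (X : Fin (n + 1) → E)
    (hXtan : ∀ i, ⟪X i, N⟫ = 0)
    (hXon : ∀ i j, ⟪X i, X j⟫ = if i = j then 1 else 0)
    (hXhor : ∀ i : Fin n, ⟪X i.castSucc, t⟫ = 0)
    (hXlast : X (Fin.last n) = T)
    (c : Fin (n + 1) → Fin (n + 1) → ℝ)
    (hc : ∀ j, AL (X j) = ∑ i, c i j • X i)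
    (H HL : ℝ)
    (hH : H = ∑ i, ⟪A (X i), X i⟫)
    (hHL : HL = -∑ i, c i i) :
    (∀ Y Z, ⟪Y, N⟫ = 0 → ⟪Z, N⟫ = 0 → L (AL Y) Z = μ * ⟪A Y, Z⟫) ∧
    HL + μ * H = μ * (1 - μ ^ 2) * ⟪A T, T⟫ := by
  obtain rfl : L = lorentzInner t := funext₂ hL
  obtain rfl : Φ = timeFlip t := funext hΦ
  have hshape : ∀ Y Z, ⟪Y, N⟫ = 0 → ⟪Z, N⟫ = 0 → lorentzInner t (AL Y) Z = μ * ⟪A Y, Z⟫ := by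
    intro Y Z hY hZ
    rw [hALΓ Y Z hY hZ, hNL, lorentzInner_smul_right, lorentzInner_timeFlip ht, ← hAΓ Y Z hY hZ]
  have hX : Orthonormal ℝ X := orthonormal_iff_ite.mpr hXon
  have hXt : ∀ i ≠ Fin.last n, ⟪X i, t⟫ = 0 := fun i hi => by
    obtain ⟨m, rfl⟩ := Fin.exists_castSucc_eq.mpr hi
    exact hXhor m
  have hdiag : ∀ i, c i i * lorentzInner t (X i) (X i) = μ * ⟪A (X i), X i⟫ := fun i => by
    rw [← hshape _ _ (hXtan i) (hXtan i), hc i, lorentzInner_sum_smul_left_of_pairwise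
      (fun _ _ => lorentzInner_eq_zero_of_orthonormal hX hXt) (fun k => c k i) i]
  have hcc : ∀ m : Fin n, c m.castSucc m.castSucc = μ * ⟪A (X m.castSucc), X m.castSucc⟫ :=
    fun m => by
      simpa [lorentzInner_self_of_orthonormal hX hXt (Fin.castSucc_ne_last m)] using hdiag m.castSucc
  have hTT : lorentzInner t T T = 2 * θ ^ 2 - 1 := by
    have hT0 : T ≠ 0 := hXlast ▸ hX.ne_zero _
    have hunit : ⟪T, T⟫ = 1 := by rw [← hXlast, real_inner_self_eq_norm_sq, hX.1, one_pow]
    rw [lorentzInner, hunit]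
    linear_combination (-2) * inner_sq_of_eq_inv_sqrt_smul ht hθ.symm hT hT0
  have hclast : c (Fin.last n) (Fin.last n) = μ ^ 3 * ⟪A T, T⟫ := by
    have hμ2 : μ ^ 2 * (2 * θ ^ 2 - 1) = 1 := hμ ▸ neg_inv_sqrt_sq_mul (by linarith)
    have h := hdiag (Fin.last n)
    rw [hXlast, hTT] at h
    linear_combination -(c (Fin.last n) (Fin.last n)) * hμ2 + μ ^ 2 * h
  refine ⟨hshape, ?_⟩
  rw [hHL, hH, Fin.sum_univ_castSucc, Fin.sum_univ_castSucc, hXlast, hclast]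
  simp only [hcc]
  rw [mul_add, Finset.mul_sum]
  ring

/-- At a point of a spacelike hypersurface `Σ ⊂ M × ℝ` with no horizontal
points (unit normal `N`, angle function `θ` with `2θ² > 1`, `θ² ≠ 1`,
Lorentzian normal `N_L = μΦ(N)` with `μ = -(2θ²-1)^{-1/2}`), the Lorentzian
and Riemannian shape operators satisfy `⟨A_L X, Y⟩_L = μ⟨AX, Y⟩` for tangent
`X, Y`, and the mean curvatures satisfy
`H_L + μH = μ(1-μ²)⟨AT, T⟩` with `T = ∇ξ/‖∇ξ‖`. -/
theorem stmt_4 {E : Type*} [NormedAddCommGroup E] [InnerProductSpace ℝ E] {n : ℕ}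
    (t N : E) (ht : ‖t‖ = 1) (hN : ‖N‖ = 1)
    (θ : ℝ) (hθ : θ = ⟪N, t⟫) (hsp : 2 * θ ^ 2 > 1) (hnh : θ ^ 2 ≠ 1)
    (μ : ℝ) (hμ : μ = -(Real.sqrt (2 * θ ^ 2 - 1))⁻¹)
    (Φ : E → E) (hΦ : ∀ X, Φ X = X - (2 * ⟪X, t⟫) • t)
    (L : E → E → ℝ) (hL : ∀ X Y, L X Y = ⟪X, Y⟫ - 2 * ⟪X, t⟫ * ⟪Y, t⟫)
    (NL : E) (hNL : NL = μ • Φ N)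
    (A AL : E →ₗ[ℝ] E) (Γ : E → E → E)
    (hAΓ : ∀ X Y, ⟪X, N⟫ = 0 → ⟪Y, N⟫ = 0 → ⟪A X, Y⟫ = ⟪Γ X Y, N⟫)
    (hALΓ : ∀ X Y, ⟪X, N⟫ = 0 → ⟪Y, N⟫ = 0 → L (AL X) Y = L (Γ X Y) NL)
    (T : E) (hT : T = (Real.sqrt (1 - θ ^ 2))⁻¹ • (t - θ • N))
    (X : Fin (n + 1) → E)
    (hXtan : ∀ i, ⟪X i, N⟫ = 0)
    (hXon : ∀ i j, ⟪X i, X j⟫ = if i = j then 1 else 0)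
    (hXhor : ∀ i : Fin n, ⟪X i.castSucc, t⟫ = 0)
    (hXlast : X (Fin.last n) = T)
    (c : Fin (n + 1) → Fin (n + 1) → ℝ)
    (hc : ∀ j, AL (X j) = ∑ i, c i j • X i)
    (H HL : ℝ)
    (hH : H = ∑ i, ⟪A (X i), X i⟫)
    (hHL : HL = -∑ i, c i i) :
    (∀ Y Z, ⟪Y, N⟫ = 0 → ⟪Z, N⟫ = 0 → L (AL Y) Z = μ * ⟪A Y, Z⟫) ∧
    HL + μ * H = μ * (1 - μ ^ 2) * ⟪A T, T⟫ :=
  stmt_4_general t N ht θ hθ hsp μ hμ Φ hΦ L hL NL hNL A AL Γ hAΓ hALΓ T hT X hXtan hXon hXhor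
    hXlast c hc H HL hH hHL
end

section
/- On a vertical helicoid Σ ⊂ M×ℝ, the angle function θ is constant along every trajectory γ of ∇ξ, and each such trajectory makes a constant angle with the vertical field ∂_t (i.e. ⟨γ'/‖γ'‖, ∂_t⟩ is constant along γ); hence the trajectories of ∇ξ are vertical helices. -/
open scoped RealInnerProductSpace

/-- On a vertical helicoid `Σ ⊂ M × ℝ` (no horizontal points, `∇θ = -A∇ξ`,
`⟨A∇ξ, ∇ξ⟩ = 0`), the angle function `θ` is constant along every trajectory
`γ` of `∇ξ`, and the (normalized) velocity of such a trajectory makes a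
constant angle with the vertical field `∂t`; hence the trajectories of `∇ξ`
are vertical helices. -/
theorem stmt_7 {E : Type*} [NormedAddCommGroup E] [InnerProductSpace ℝ E] {S : Type*}
    (t : E) (ht : ‖t‖ = 1)
    (N : S → E) (hN : ∀ x, ‖N x‖ = 1)
    (θ : S → ℝ) (hθ : ∀ x, θ x = ⟪N x, t⟫)
    (hnh : ∀ x, (θ x) ^ 2 ≠ 1)
    (A : S → E →ₗ[ℝ] E)
    (gradXi gradθ : S → E)
    (hgrad : ∀ x, gradXi x = t - θ x • N x)
    (hgθ : ∀ x, gradθ x = -(A x (gradXi x)))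
    (hasymp : ∀ x, ⟪A x (gradXi x), gradXi x⟫ = 0)
    (γ : ℝ → S) (V : ℝ → E) (hV : ∀ s, V s = gradXi (γ s))
    (hder : ∀ s, HasDerivAt (fun u => θ (γ u)) ⟪gradθ (γ s), V s⟫ s) :
    (∀ s₁ s₂, θ (γ s₁) = θ (γ s₂)) ∧
    (∀ s₁ s₂, ⟪‖V s₁‖⁻¹ • V s₁, t⟫ = ⟪‖V s₂‖⁻¹ • V s₂, t⟫) := by
  -- derivative is zero
  have hzero : ∀ s, HasDerivAt (fun u => θ (γ u)) 0 s := by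
    intro s
    have h := hder s
    have : ⟪gradθ (γ s), V s⟫ = 0 := by
      rw [hgθ, hV, inner_neg_left, hasymp, neg_zero]
    rwa [this] at h
  have hconst : ∀ s₁ s₂, θ (γ s₁) = θ (γ s₂) := by
    intro s₁ s₂
    have : (fun u => θ (γ u)) s₁ = (fun u => θ (γ u)) s₂ := by
      apply is_const_of_deriv_eq_zero (f := fun u => θ (γ u))
      · intro x; exact (hzero x).differentiableAt
      · intro x; exact (hzero x).deriv
    exact this
  refine ⟨hconst, ?_⟩
  -- compute inner products
  have hNt : ∀ x, ⟪N x, t⟫ = θ x := fun x => (hθ x).symm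
  have hVt : ∀ s, ⟪V s, t⟫ = 1 - (θ (γ s)) ^ 2 := by
    intro s
    rw [hV, hgrad, inner_sub_left, real_inner_smul_left, hNt,
      real_inner_self_eq_norm_sq, ht]
    ring
  have hVV : ∀ s, ⟪V s, V s⟫ = 1 - (θ (γ s)) ^ 2 := by
    intro s
    rw [hV, hgrad, inner_sub_left, inner_sub_right, inner_sub_right,
      real_inner_smul_left, real_inner_smul_left, real_inner_smul_right,
      real_inner_smul_right, hNt, real_inner_self_eq_norm_sq,
      real_inner_self_eq_norm_sq, real_inner_comm (N (γ s)) t, hNt, ht, hN]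
    ring
  have hnormV : ∀ s, ‖V s‖ = Real.sqrt (1 - (θ (γ s)) ^ 2) := by
    intro s
    rw [← hVV s, real_inner_self_eq_norm_sq, Real.sqrt_sq (norm_nonneg _)]
  intro s₁ s₂
  have key : ∀ s, ⟪‖V s‖⁻¹ • V s, t⟫
      = (Real.sqrt (1 - (θ (γ s)) ^ 2))⁻¹ * (1 - (θ (γ s)) ^ 2) := by
    intro s
    rw [real_inner_smul_left, hVt, hnormV]
  rw [key, key, hconst s₁ s₂]
end

section
/- The function u(x₁,…,xₙ) = Σ_{i=1}^{n−2} aᵢxᵢ + b·arctan(xₙ/x_{n−1}) on the half-space {x_{n−1} > 0} ⊂ ℝⁿ is harmonic and horizontally homothetic (⟨∇u, ∇‖∇u‖⟩ = 0), with ‖∇u‖² = Σ_{i=1}^{n−2} aᵢ² + b²/(x_{n−1}² + xₙ²). -/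
/-!
Write `r = x_p² + x_q²` for the squared radius in the plane of the last two coordinates and
`J y = y_p e_q - y_q e_p` for the quarter turn in that plane. Then `∇u = c + (b / r) J`, where
`c` is the constant gradient of the linear part, supported off that plane. Since `⟪c, J y⟫ = 0`
and `‖J y‖² = r`, we get `‖∇u‖² = ‖c‖² + b² / r`, a function of `r` alone; as
`∇r = 2(x_p e_p + x_q e_q)` is orthogonal to both `c` and `J x`, the gradient of `‖∇u‖` is
orthogonal to `∇u`. For harmonicity, `div (ψ J) = ⟪∇ψ, J x⟫ + ψ tr J`, and both terms vanish
for `ψ = b / r`: `J` is skew, so `tr J = 0`, and `∇ψ` is parallel to `∇r`.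
-/

open scoped RealInnerProductSpace
open Filter Topology Real

section Gradient

variable {E : Type*} [NormedAddCommGroup E] [InnerProductSpace ℝ E] [CompleteSpace E]
  {f g : E → ℝ} {f' g' x : E}

theorem hasGradientAt_of_hasFDerivAt {L : E →L[ℝ] ℝ} (h : HasFDerivAt f L x)
    (hL : ∀ v, L v = ⟪f', v⟫) : HasGradientAt f f' x := by
  rw [hasGradientAt_iff_hasFDerivAt]
  exact h.congr_fderiv (ContinuousLinearMap.ext fun v => by simp [hL])

theorem HasGradientAt.add (hf : HasGradientAt f f' x) (hg : HasGradientAt g g' x) :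
    HasGradientAt (fun y => f y + g y) (f' + g') x :=
  hasGradientAt_of_hasFDerivAt (hf.hasFDerivAt.add hg.hasFDerivAt) fun v => by
    simp [inner_add_left]

theorem HasDerivAt.comp_hasGradientAt {φ : ℝ → ℝ} {φ' : ℝ} (hφ : HasDerivAt φ φ' (f x))
    (hf : HasGradientAt f f' x) : HasGradientAt (φ ∘ f) (φ' • f') x :=
  hasGradientAt_of_hasFDerivAt (hφ.comp_hasFDerivAt x hf.hasFDerivAt) fun v => by
    simp [real_inner_smul_left]

theorem hasGradientAt_inner_left (c : E) : HasGradientAt (fun y => ⟪c, y⟫) c x :=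
  hasGradientAt_of_hasFDerivAt (innerSL ℝ c).hasFDerivAt fun v => by simp

end Gradient

section Euclidean

variable {ι : Type*}

local notation "𝔼" => EuclideanSpace ℝ ι

def planeNormSq (p q : ι) (y : 𝔼) : ℝ := y p ^ 2 + y q ^ 2

theorem planeNormSq_ne_zero {p q : ι} {x : 𝔼} (hx : x p ≠ 0) : planeNormSq p q x ≠ 0 := by
  unfold planeNormSq
  positivity

variable [Fintype ι] [DecidableEq ι]

noncomputable def divergence (V : 𝔼 → 𝔼) (x : 𝔼) : ℝ :=
  ∑ i, fderiv ℝ (fun y => V y i) x (EuclideanSpace.single i 1)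

theorem sum_fderiv_fderiv_single_eq_divergence {u : 𝔼 → ℝ} {V : 𝔼 → 𝔼} {x : 𝔼}
    (h : ∀ᶠ y in 𝓝 x, HasGradientAt u (V y) y) :
    ∑ i, fderiv ℝ (fun y => fderiv ℝ u y (EuclideanSpace.single i 1)) x
      (EuclideanSpace.single i 1) = divergence V x := by
  refine Finset.sum_congr rfl fun i _ => ?_
  have hi : (fun y => fderiv ℝ u y (EuclideanSpace.single i 1)) =ᶠ[𝓝 x] fun y => V y i := by
    filter_upwards [h] with y hy
    simp [hy.fderiv_apply, EuclideanSpace.inner_single_right]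
  rw [hi.fderiv_eq]

theorem divergence_const_add_smul_clm (c : 𝔼) {ψ : 𝔼 → ℝ} {w x : 𝔼}
    (J : 𝔼 →L[ℝ] 𝔼) (hψ : HasGradientAt ψ w x) :
    divergence (fun y => c + ψ y • J y) x =
      ⟪w, J x⟫ + ψ x * ∑ i, J (EuclideanSpace.single i 1) i := by
  have hJ (i : ι) : HasFDerivAt (fun y => J y i) ((EuclideanSpace.proj i).comp J) x :=
    ((EuclideanSpace.proj i).comp J).hasFDerivAt
  have hterm (i : ι) : fderiv ℝ (fun y => (c + ψ y • J y) i) x (EuclideanSpace.single i 1) =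
      w i * J x i + ψ x * J (EuclideanSpace.single i 1) i := by
    simp only [PiLp.add_apply, PiLp.smul_apply, smul_eq_mul, fderiv_const_add,
      (hψ.hasFDerivAt.fun_mul (hJ i)).fderiv]
    simp only [add_apply, smul_apply, ContinuousLinearMap.comp_apply, PiLp.proj_apply,
      smul_eq_mul, InnerProductSpace.toDual_apply_apply, EuclideanSpace.inner_single_right,
      one_mul, conj_trivial]
    ring
  simp only [divergence, hterm, Finset.sum_add_distrib, Finset.mul_sum, PiLp.inner_apply]
  simp [mul_comm]

variable (p q : ι)

noncomputable def quarterTurn : 𝔼 →L[ℝ] 𝔼 :=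
  (EuclideanSpace.proj p).smulRight (EuclideanSpace.single q 1) -
    (EuclideanSpace.proj q).smulRight (EuclideanSpace.single p 1)

variable {p q}

theorem quarterTurn_apply (y : 𝔼) :
    quarterTurn p q y = y p • EuclideanSpace.single q 1 - y q • EuclideanSpace.single p 1 :=
  rfl

theorem inner_quarterTurn (v y : 𝔼) : ⟪v, quarterTurn p q y⟫ = v q * y p - v p * y q := by
  simp only [quarterTurn_apply, inner_sub_right, real_inner_smul_right,
    EuclideanSpace.inner_single_right, one_mul, conj_trivial]
  ring

theorem sum_quarterTurn_single_apply :
    ∑ i, quarterTurn p q (EuclideanSpace.single i 1) i = 0 := by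
  refine Finset.sum_eq_zero fun i _ => ?_
  simp only [quarterTurn_apply, PiLp.sub_apply, PiLp.smul_apply, PiLp.single_apply, smul_eq_mul]
  split_ifs <;> subst_vars <;> simp_all

theorem norm_quarterTurn_sq (hpq : p ≠ q) (y : 𝔼) :
    ‖quarterTurn p q y‖ ^ 2 = planeNormSq p q y := by
  rw [← real_inner_self_eq_norm_sq, inner_quarterTurn]
  simp [quarterTurn_apply, hpq, hpq.symm, planeNormSq, sq]

theorem hasGradientAt_planeNormSq (x : 𝔼) :
    HasGradientAt (planeNormSq p q)
      ((2 * x p) • EuclideanSpace.single p 1 + (2 * x q) • EuclideanSpace.single q 1) x := by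
  have hcoord (i : ι) := PiLp.hasFDerivAt_apply (𝕜 := ℝ) 2 x i
  refine hasGradientAt_of_hasFDerivAt (((hcoord p).pow 2).add ((hcoord q).pow 2)) fun v => ?_
  simp [inner_add_left, real_inner_smul_left, EuclideanSpace.inner_single_left]

theorem inner_gradient_planeNormSq_quarterTurn (x : 𝔼) :
    ⟪(2 * x p) • EuclideanSpace.single p 1 + (2 * x q) • EuclideanSpace.single q 1,
      quarterTurn p q x⟫ = 0 := by
  by_cases hpq : p = q
  · subst hpq; simp [inner_quarterTurn]
  · simp only [inner_quarterTurn, PiLp.add_apply, PiLp.smul_apply, smul_eq_mul,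
      PiLp.single_apply, hpq, Ne.symm hpq, ↓reduceIte]
    ring

theorem hasGradientAt_arctan_div {x : 𝔼} (hx : x p ≠ 0) :
    HasGradientAt (fun y : 𝔼 => arctan (y q / y p))
      ((planeNormSq p q x)⁻¹ • quarterTurn p q x) x := by
  have hcoord (i : ι) := PiLp.hasFDerivAt_apply (𝕜 := ℝ) 2 x i
  have hinv : HasFDerivAt (fun y : 𝔼 => (y p)⁻¹) _ x :=
    (hasDerivAt_inv hx).comp_hasFDerivAt x (hcoord p)
  simp only [div_eq_mul_inv]
  refine hasGradientAt_of_hasFDerivAt ((hcoord q).fun_mul hinv).arctan fun v => ?_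
  have hr : planeNormSq p q x ≠ 0 := planeNormSq_ne_zero hx
  rw [real_inner_smul_left, real_inner_comm, inner_quarterTurn]
  simp only [smul_apply, add_apply, PiLp.proj_apply, smul_eq_mul]
  field_simp
  unfold planeNormSq
  ring

noncomputable def linearAddArctan (c : 𝔼) (b : ℝ) (p q : ι) (y : 𝔼) : ℝ :=
  ⟪c, y⟫ + b * arctan (y q / y p)

variable {c : EuclideanSpace ℝ ι} {b : ℝ}

theorem hasGradientAt_linearAddArctan {x : 𝔼} (hx : x p ≠ 0) :
    HasGradientAt (linearAddArctan c b p q)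
      (c + (b * (planeNormSq p q x)⁻¹) • quarterTurn p q x) x := by
  have h := (hasGradientAt_inner_left c).add
    (((hasDerivAt_id _).const_mul b).comp_hasGradientAt (hasGradientAt_arctan_div (q := q) hx))
  unfold linearAddArctan
  simpa [smul_smul] using h

theorem eventually_hasGradientAt_linearAddArctan {x : 𝔼} (hx : x p ≠ 0) :
    ∀ᶠ y in 𝓝 x, HasGradientAt (linearAddArctan c b p q)
      (c + (b * (planeNormSq p q y)⁻¹) • quarterTurn p q y) y := by
  filter_upwards [(PiLp.continuous_apply 2 _ p).continuousAt.eventually_ne hx] with y hy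
  exact hasGradientAt_linearAddArctan hy

theorem sum_fderiv_fderiv_linearAddArctan {x : 𝔼} (hx : x p ≠ 0) :
    ∑ i : ι, fderiv ℝ
      (fun y => fderiv ℝ (linearAddArctan c b p q) y (EuclideanSpace.single i 1)) x
      (EuclideanSpace.single i 1) = 0 := by
  have hr : planeNormSq p q x ≠ 0 := planeNormSq_ne_zero hx
  have hψ := ((hasDerivAt_inv hr).const_mul b).comp_hasGradientAt (hasGradientAt_planeNormSq x)
  rw [sum_fderiv_fderiv_single_eq_divergence (eventually_hasGradientAt_linearAddArctan hx),
    divergence_const_add_smul_clm c (ψ := fun y => b * (planeNormSq p q y)⁻¹) _ hψ,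
    real_inner_smul_left, inner_gradient_planeNormSq_quarterTurn, sum_quarterTurn_single_apply]
  simp

theorem norm_gradient_linearAddArctan_sq (hpq : p ≠ q) (hcp : c p = 0) (hcq : c q = 0)
    {x : 𝔼} (hx : x p ≠ 0) :
    ‖gradient (linearAddArctan c b p q) x‖ ^ 2 = ‖c‖ ^ 2 + b ^ 2 / planeNormSq p q x := by
  have hr : planeNormSq p q x ≠ 0 := planeNormSq_ne_zero hx
  rw [(hasGradientAt_linearAddArctan hx).gradient, norm_add_sq_real, real_inner_smul_right,
    inner_quarterTurn, hcp, hcq, norm_smul, mul_pow, norm_quarterTurn_sq hpq, Real.norm_eq_abs,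
    sq_abs]
  field_simp
  ring

theorem inner_gradient_linearAddArctan_gradient_norm (hpq : p ≠ q) (hcp : c p = 0)
    (hcq : c q = 0) {x : 𝔼} (hx : x p ≠ 0) :
    ⟪gradient (linearAddArctan c b p q) x,
      gradient (fun y => ‖gradient (linearAddArctan c b p q) y‖) x⟫ = 0 := by
  set u := linearAddArctan c b p q
  -- `√` is not differentiable at `0`, but at a critical point of `u` the claim is trivial.
  by_cases h0 : gradient u x = 0
  · simp [h0]
  have hr : planeNormSq p q x ≠ 0 := planeNormSq_ne_zero hx
  have hnorm : ‖c‖ ^ 2 + b ^ 2 * (planeNormSq p q x)⁻¹ ≠ 0 := by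
    rw [← div_eq_mul_inv, ← norm_gradient_linearAddArctan_sq hpq hcp hcq hx]
    positivity
  have hev : (fun y => ‖gradient u y‖) =ᶠ[𝓝 x]
      (fun t => √(‖c‖ ^ 2 + b ^ 2 * t⁻¹)) ∘ planeNormSq p q := by
    filter_upwards [(PiLp.continuous_apply 2 _ p).continuousAt.eventually_ne hx] with y hy
    rw [Function.comp_apply, ← div_eq_mul_inv,
      ← norm_gradient_linearAddArctan_sq hpq hcp hcq hy, Real.sqrt_sq (norm_nonneg _)]
  have hφ := (((hasDerivAt_inv hr).const_mul (b ^ 2)).const_add (‖c‖ ^ 2)).sqrt hnorm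
  rw [((hφ.comp_hasGradientAt (hasGradientAt_planeNormSq x)).congr_of_eventuallyEq hev).gradient,
    real_inner_smul_right, (hasGradientAt_linearAddArctan hx).gradient, inner_add_left,
    real_inner_smul_left, real_inner_comm _ (quarterTurn p q x),
    inner_gradient_planeNormSq_quarterTurn]
  simp [inner_add_right, real_inner_smul_right, EuclideanSpace.inner_single_right, hcp, hcq]

end Euclidean

/-- The function `u(x₁,…,xₙ) = ∑_{i<n-2} aᵢxᵢ + b·arctan(xₙ/x_{n-1})` on the
half-space `{x_{n-1} > 0} ⊂ ℝⁿ` is harmonic (vanishing sum of pure second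
partial derivatives) and horizontally homothetic
(`⟨∇u, ∇‖∇u‖⟩ = 0`), with `‖∇u‖² = ∑ aᵢ² + b²/(x_{n-1}² + xₙ²)`.
(Indices are 0-based: `x_{n-1}`, `xₙ` of the paper are coordinates
`n-2`, `n-1` here.) -/
theorem stmt_12 (n : ℕ) (hn : 2 ≤ n) (a : Fin n → ℝ) (b : ℝ)
    (u : EuclideanSpace ℝ (Fin n) → ℝ)
    (hu : ∀ x, u x =
      (∑ i ∈ Finset.univ.filter (fun i : Fin n => (i : ℕ) < n - 2), a i * x i)
        + b * Real.arctan (x ⟨n - 1, by omega⟩ / x ⟨n - 2, by omega⟩)) :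
    ∀ x : EuclideanSpace ℝ (Fin n), 0 < x ⟨n - 2, by omega⟩ →
      (∑ i : Fin n, fderiv ℝ (fun y => fderiv ℝ u y (EuclideanSpace.single i 1)) x
          (EuclideanSpace.single i 1) = 0) ∧
      ⟪gradient u x, gradient (fun y => ‖gradient u y‖) x⟫ = 0 ∧
      ‖gradient u x‖ ^ 2 =
        (∑ i ∈ Finset.univ.filter (fun i : Fin n => (i : ℕ) < n - 2), (a i) ^ 2)
          + b ^ 2 / ((x ⟨n - 2, by omega⟩) ^ 2 + (x ⟨n - 1, by omega⟩) ^ 2) := by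
  intro x hx
  set p : Fin n := ⟨n - 2, by omega⟩
  set q : Fin n := ⟨n - 1, by omega⟩
  set c : EuclideanSpace ℝ (Fin n) := WithLp.toLp 2 fun i => if (i : ℕ) < n - 2 then a i else 0
  have hpq : p ≠ q := by simp [p, q, Fin.ext_iff]; omega
  have hcp : c p = 0 := by simp [c, p]
  have hcq : c q = 0 := by simp [c, q]; omega
  have hx' : x p ≠ 0 := hx.ne'
  obtain rfl : u = linearAddArctan c b p q := funext fun y => by
    simp [hu, linearAddArctan, c, PiLp.inner_apply, Finset.sum_filter, mul_comm]
  refine ⟨sum_fderiv_fderiv_linearAddArctan hx',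
    inner_gradient_linearAddArctan_gradient_norm hpq hcp hcq hx', ?_⟩
  rw [norm_gradient_linearAddArctan_sq hpq hcp hcq hx', EuclideanSpace.real_norm_sq_eq]
  simp [c, planeNormSq, Finset.sum_filter]
end

section
/- Let Σ ⊂ M×ℝ be the a-pitched twisting of a hypersurface Σ₀ ⊂ M by a one-parameter group of isometries Γ_s, i.e. Σ = {(Γ_s(p), as) : p ∈ Σ₀, s ∈ I}, with ν-function ν(α_p(s),as) = ⟨α_p'(s), η_s(α_p(s))⟩ where α_p(s) = Γ_s(p). Then the angle function of Σ is θ = ν/√(a²+ν²); in particular ∇ξ never vanishes on Σ, and ∇ξ is an asymptotic direction of Σ if and only if ∇ν is horizontal. Moreover 2θ² − 1 = (ν²−a²)/(ν²+a²), so the open set where |ν| > a is spacelike. -/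
open scoped RealInnerProductSpace

/-!
Since `η ⊥ ∂t`, pairing `N = (a² + ν²)^{-1/2}(-aη + ν∂t)` with `∂t` gives `θ = ν/√(a² + ν²)`,
and `a > 0` forces `θ² < 1`. The tangential projection `∇ξ = ∂t - θN` then has vertical
component `1 - θ² > 0`, so it never vanishes. As `∇ν` is tangent, `⟨∇ν, ∇ξ⟩ = ⟨∇ν, ∂t⟩`, and
the chain rule `∇θ = a²(a² + ν²)^{-3/2} ∇ν` with a nonzero factor turns
`⟨A∇ξ, ∇ξ⟩ = -⟨∇θ, ∇ξ⟩` into a nonzero multiple of `⟨∇ν, ∂t⟩`.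
-/

section InnerProductSpace

variable {E : Type*} [NormedAddCommGroup E] [InnerProductSpace ℝ E] {t : E}

theorem inner_twistedNormal_of_orthogonal (ht : ‖t‖ = 1) {η : E} (hη : ⟪η, t⟫ = 0)
    (a ν : ℝ) :
    ⟪(Real.sqrt (a ^ 2 + ν ^ 2))⁻¹ • (-(a • η) + ν • t), t⟫ = ν / Real.sqrt (a ^ 2 + ν ^ 2) := by
  rw [real_inner_smul_left, inner_add_left, inner_neg_left, real_inner_smul_left,
    real_inner_smul_left, hη, real_inner_self_eq_norm_sq, ht]
  ring

theorem sub_inner_smul_ne_zero (ht : ‖t‖ = 1) {N : E} (hN : ⟪N, t⟫ ^ 2 < 1) :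
    t - ⟪N, t⟫ • N ≠ 0 := by
  intro h
  have hvert : ⟪t - ⟪N, t⟫ • N, t⟫ = 1 - ⟪N, t⟫ ^ 2 := by
    rw [inner_sub_left, real_inner_smul_left, real_inner_self_eq_norm_sq, ht]
    ring
  rw [h, inner_zero_left] at hvert
  linarith

theorem inner_sub_smul_of_inner_eq_zero {v N : E} (hvN : ⟪v, N⟫ = 0) (θ : ℝ) :
    ⟪v, t - θ • N⟫ = ⟪v, t⟫ := by
  rw [inner_sub_right, real_inner_smul_right, hvN, mul_zero, sub_zero]

end InnerProductSpace

theorem sq_div_sqrt_sq_add_sq_lt_one {a : ℝ} (ha : a ≠ 0) (ν : ℝ) :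
    (ν / Real.sqrt (a ^ 2 + ν ^ 2)) ^ 2 < 1 := by
  have hpos : 0 < a ^ 2 + ν ^ 2 := by positivity
  rw [div_pow, Real.sq_sqrt hpos.le, div_lt_one hpos]
  linarith [sq_pos_of_ne_zero ha]

theorem two_mul_sq_div_sqrt_sq_add_sq_sub_one {a : ℝ} (ha : a ≠ 0) (ν : ℝ) :
    2 * (ν / Real.sqrt (a ^ 2 + ν ^ 2)) ^ 2 - 1 = (ν ^ 2 - a ^ 2) / (ν ^ 2 + a ^ 2) := by
  have hpos : 0 < a ^ 2 + ν ^ 2 := by positivity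
  rw [div_pow, Real.sq_sqrt hpos.le, add_comm (ν ^ 2)]
  field_simp
  ring

theorem stmt_14_general {E : Type*} [NormedAddCommGroup E] [InnerProductSpace ℝ E] {S : Type*}
    (t : E) (ht : ‖t‖ = 1) (a : ℝ) (ha : 0 < a)
    (ηs : S → E)
    (hηhor : ∀ z, ⟪ηs z, t⟫ = 0)
    (ν : S → ℝ)
    (N : S → E)
    (hN : ∀ z, N z = (Real.sqrt (a ^ 2 + (ν z) ^ 2))⁻¹ • (-(a • ηs z) + ν z • t))
    (θ : S → ℝ) (hθ : ∀ z, θ z = ⟪N z, t⟫)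
    (gradXi gradθ gradν : S → E)
    (hgradXi : ∀ z, gradXi z = t - θ z • N z)
    (A : S → E →ₗ[ℝ] E)
    (hAθ : ∀ z, gradθ z = -(A z (gradXi z)))
    (hchain : ∀ z, gradθ z = (a ^ 2 * ((Real.sqrt (a ^ 2 + (ν z) ^ 2)) ^ 3)⁻¹) • gradν z)
    (hνtan : ∀ z, ⟪gradν z, N z⟫ = 0) :
    (∀ z, θ z = ν z / Real.sqrt (a ^ 2 + (ν z) ^ 2)) ∧
    (∀ z, gradXi z ≠ 0) ∧
    ((∀ z, ⟪A z (gradXi z), gradXi z⟫ = 0) ↔ (∀ z, ⟪gradν z, t⟫ = 0)) ∧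
    (∀ z, 2 * (θ z) ^ 2 - 1 = ((ν z) ^ 2 - a ^ 2) / ((ν z) ^ 2 + a ^ 2)) ∧
    (∀ z, a < |ν z| → 2 * (θ z) ^ 2 > 1) := by
  have hθν : ∀ z, θ z = ν z / Real.sqrt (a ^ 2 + (ν z) ^ 2) := fun z => by
    rw [hθ, hN, inner_twistedNormal_of_orthogonal ht (hηhor z)]
  have h2θ : ∀ z, 2 * (θ z) ^ 2 - 1 = ((ν z) ^ 2 - a ^ 2) / ((ν z) ^ 2 + a ^ 2) := fun z => by
    rw [hθν, two_mul_sq_div_sqrt_sq_add_sq_sub_one ha.ne']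
  refine ⟨hθν, fun z => ?_, forall_congr' fun z => ?_, h2θ, fun z hz => ?_⟩
  · rw [hgradXi, hθ]
    apply sub_inner_smul_ne_zero ht
    rw [← hθ, hθν]
    exact sq_div_sqrt_sq_add_sq_lt_one ha.ne' (ν z)
  · have hc : a ^ 2 * ((Real.sqrt (a ^ 2 + (ν z) ^ 2)) ^ 3)⁻¹ ≠ 0 := by positivity
    have hAX : A z (gradXi z) = -(a ^ 2 * ((Real.sqrt (a ^ 2 + (ν z) ^ 2)) ^ 3)⁻¹) • gradν z := by
      rw [neg_smul, ← hchain, hAθ, neg_neg]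
    rw [hAX, real_inner_smul_left, hgradXi, inner_sub_smul_of_inner_eq_zero (hνtan z),
      mul_eq_zero, neg_eq_zero, or_iff_right hc]
  · have hν2 : a ^ 2 < (ν z) ^ 2 := sq_lt_sq.2 (by rwa [abs_of_pos ha])
    have hfrac : 0 < ((ν z) ^ 2 - a ^ 2) / ((ν z) ^ 2 + a ^ 2) :=
      div_pos (sub_pos.2 hν2) (by positivity)
    linarith [h2θ z]

/-- For the `a`-pitched twisting `Σ = {(Γ_s(p), as)}` of a hypersurface
`Σ₀ ⊂ M` (points `z` of `Σ` carrying the horizontal unit normal `ηs` of the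
rotated hypersurface, the horizontal orbit velocity `αdot = α_p'(s)`, the
ν-function `ν = ⟨αdot, ηs⟩` and unit normal
`N = (a²+ν²)^{-1/2}(-aηs + ν∂t)`): the angle function is `θ = ν/√(a²+ν²)`,
`∇ξ` never vanishes, `∇ξ` is an asymptotic direction iff `∇ν` is horizontal,
and `2θ² - 1 = (ν²-a²)/(ν²+a²)`, so `Σ` is spacelike where `|ν| > a`. -/
theorem stmt_14 {E : Type*} [NormedAddCommGroup E] [InnerProductSpace ℝ E] {S : Type*}
    (t : E) (ht : ‖t‖ = 1) (a : ℝ) (ha : 0 < a)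
    (ηs αdot : S → E)
    (hηunit : ∀ z, ‖ηs z‖ = 1) (hηhor : ∀ z, ⟪ηs z, t⟫ = 0)
    (hαhor : ∀ z, ⟪αdot z, t⟫ = 0)
    (ν : S → ℝ) (hν : ∀ z, ν z = ⟪αdot z, ηs z⟫)
    (N : S → E)
    (hN : ∀ z, N z = (Real.sqrt (a ^ 2 + (ν z) ^ 2))⁻¹ • (-(a • ηs z) + ν z • t))
    (θ : S → ℝ) (hθ : ∀ z, θ z = ⟪N z, t⟫)
    (gradXi gradθ gradν : S → E)
    (hgradXi : ∀ z, gradXi z = t - θ z • N z)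
    (A : S → E →ₗ[ℝ] E)
    (hAθ : ∀ z, gradθ z = -(A z (gradXi z)))
    (hchain : ∀ z, gradθ z = (a ^ 2 * ((Real.sqrt (a ^ 2 + (ν z) ^ 2)) ^ 3)⁻¹) • gradν z)
    (hνtan : ∀ z, ⟪gradν z, N z⟫ = 0) :
    (∀ z, θ z = ν z / Real.sqrt (a ^ 2 + (ν z) ^ 2)) ∧
    (∀ z, gradXi z ≠ 0) ∧
    ((∀ z, ⟪A z (gradXi z), gradXi z⟫ = 0) ↔ (∀ z, ⟪gradν z, t⟫ = 0)) ∧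
    (∀ z, 2 * (θ z) ^ 2 - 1 = ((ν z) ^ 2 - a ^ 2) / ((ν z) ^ 2 + a ^ 2)) ∧
    (∀ z, a < |ν z| → 2 * (θ z) ^ 2 > 1) :=
  stmt_14_general t ht a ha ηs hηhor ν N hN θ hθ gradXi gradθ gradν hgradXi A hAθ hchain hνtan
end

section
/- In ℍⁿ×ℝ (n ≥ 2), the profile function of the rotational half-catenoid over the geodesic sphere of radius r > 0, a(s) = sinh^{n−1}(r) ∫_r^s (sinh^{2n−2}(τ) − sinh^{2n−2}(r))^{−1/2} dτ, is bounded above by π/(2(n−1)) for all s > r. Hence each rotational catenoid Σ_r in ℍⁿ×ℝ is contained in a horizontal slab of width π/(n−1). -/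
/-! With `P = sinh ^ (n - 1)` and `c = P r`, the function `arccos (c / P τ)` increases from `0`
at `τ = r` to at most `π / 2`, with derivative `c P' / (P √(P² - c²))`. Since
`P' / P = (n - 1) coth τ ≥ n - 1`, the integrand `(n - 1) c / √(P² - c²)` is dominated by this
derivative; the domination also gives integrability across the singularity at `τ = r`. -/

open MeasureTheory Set intervalIntegral Real

theorem hasDerivAt_arccos_const_div {P : ℝ → ℝ} {P' c x : ℝ} (hP : HasDerivAt P P' x)
    (hc : 0 < c) (hcx : c < P x) :
    HasDerivAt (fun t => arccos (c / P t)) (c * P' / (P x * √(P x ^ 2 - c ^ 2))) x := by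
  have hPx : 0 < P x := hc.trans hcx
  have hlt : c / P x < 1 := (div_lt_one hPx).2 hcx
  have hquot : HasDerivAt (fun t => c / P t) (-(c * P') / P x ^ 2) x := by
    simpa using (hasDerivAt_const x c).fun_div hP hPx.ne'
  have hsqrt : √(1 - (c / P x) ^ 2) = √(P x ^ 2 - c ^ 2) / P x := by
    rw [show 1 - (c / P x) ^ 2 = (P x ^ 2 - c ^ 2) / P x ^ 2 by field_simp,
      sqrt_div' _ (sq_nonneg _), sqrt_sq hPx.le]
  have hD : 0 < √(P x ^ 2 - c ^ 2) := sqrt_pos.2 (by nlinarith)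
  refine ((hasDerivAt_arccos (by linarith [div_pos hc hPx]) hlt.ne).comp x hquot).congr_deriv ?_
  rw [hsqrt]
  field_simp

section LogDerivBound

variable {P P' : ℝ → ℝ} {r s k : ℝ}

theorem intervalIntegrable_and_integral_eq_arccos_div (hrs : r ≤ s) (hPr : 0 < P r)
    (hPc : ContinuousOn P (Icc r s)) (hP : ∀ τ ∈ Ioo r s, HasDerivAt P (P' τ) τ)
    (hP' : ∀ τ ∈ Ioo r s, 0 ≤ P' τ) (hgt : ∀ τ ∈ Ioc r s, P r < P τ) :
    IntervalIntegrable (fun τ => P r * P' τ / (P τ * √(P τ ^ 2 - P r ^ 2))) volume r s ∧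
      ∫ τ in r..s, P r * P' τ / (P τ * √(P τ ^ 2 - P r ^ 2)) = arccos (P r / P s) := by
  have hpos : ∀ τ ∈ Icc r s, 0 < P τ := fun τ hτ =>
    hτ.1.eq_or_lt.elim (fun h => h ▸ hPr) fun h => hPr.trans (hgt τ ⟨h, hτ.2⟩)
  have hcont : ContinuousOn (fun τ => arccos (P r / P τ)) (Icc r s) :=
    continuous_arccos.comp_continuousOn (continuousOn_const.div hPc fun τ hτ => (hpos τ hτ).ne')
  have hderiv : ∀ τ ∈ Ioo r s, HasDerivAt (fun τ => arccos (P r / P τ))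
      (P r * P' τ / (P τ * √(P τ ^ 2 - P r ^ 2))) τ := fun τ hτ =>
    hasDerivAt_arccos_const_div (hP τ hτ) hPr (hgt τ (Ioo_subset_Ioc_self hτ))
  have hint : IntervalIntegrable (fun τ => P r * P' τ / (P τ * √(P τ ^ 2 - P r ^ 2))) volume r s :=
    intervalIntegrable_deriv_of_nonneg (by rwa [uIcc_of_le hrs]) (by simpa [hrs] using hderiv)
      (by
        simp only [hrs, min_eq_left, max_eq_right]
        intro τ hτ
        have := hpos τ (Ioo_subset_Icc_self hτ)
        have := hP' τ hτ
        positivity)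
  refine ⟨hint, ?_⟩
  rw [integral_eq_sub_of_hasDerivAt_of_le hrs hcont hderiv hint, div_self hPr.ne', arccos_one,
    sub_zero]

theorem mul_integral_inv_sqrt_sq_sub_sq_le (hrs : r < s) (hk : 0 < k) (hPr : 0 < P r)
    (hPc : ContinuousOn P (Icc r s)) (hP : ∀ τ ∈ Ioo r s, HasDerivAt P (P' τ) τ)
    (hkP : ∀ τ ∈ Ioo r s, k * P τ ≤ P' τ) (hgt : ∀ τ ∈ Ioc r s, P r < P τ) :
    k * P r * ∫ τ in r..s, (√(P τ ^ 2 - P r ^ 2))⁻¹ ≤ π / 2 := by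
  have hpos : ∀ τ ∈ Ioo r s, 0 < P τ := fun τ hτ => hPr.trans (hgt τ (Ioo_subset_Ioc_self hτ))
  have hD : ∀ τ ∈ Ioo r s, 0 < √(P τ ^ 2 - P r ^ 2) := fun τ hτ => by
    have := hgt τ (Ioo_subset_Ioc_self hτ)
    exact sqrt_pos.2 (by nlinarith)
  obtain ⟨hφint, hφ⟩ := intervalIntegrable_and_integral_eq_arccos_div hrs.le hPr hPc hP
    (fun τ hτ => (mul_pos hk (hpos τ hτ)).le.trans (hkP τ hτ)) hgt
  have hle : ∀ τ ∈ Ioo r s, k * P r * (√(P τ ^ 2 - P r ^ 2))⁻¹ ≤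
      P r * P' τ / (P τ * √(P τ ^ 2 - P r ^ 2)) := fun τ hτ => by
    have hPτ := hpos τ hτ
    have hDτ := hD τ hτ
    rw [← div_eq_mul_inv, div_le_div_iff₀ hDτ (by positivity)]
    nlinarith [mul_le_mul_of_nonneg_left (hkP τ hτ) (mul_pos hPr hDτ).le]
  have hint : IntervalIntegrable (fun τ => (√(P τ ^ 2 - P r ^ 2))⁻¹) volume r s := by
    rw [intervalIntegrable_iff_integrableOn_Ioo_of_le hrs.le] at hφint ⊢
    have hcont : ContinuousOn (fun τ => (√(P τ ^ 2 - P r ^ 2))⁻¹) (Ioo r s) :=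
      (((hPc.mono Ioo_subset_Icc_self).pow 2).sub continuousOn_const).sqrt.inv₀
        fun τ hτ => (hD τ hτ).ne'
    refine (hφint.const_mul (k * P r)⁻¹).mono' (hcont.aestronglyMeasurable measurableSet_Ioo)
      (ae_restrict_of_forall_mem measurableSet_Ioo fun τ hτ => ?_)
    rw [norm_of_nonneg (inv_nonneg.2 (hD τ hτ).le), le_inv_mul_iff₀ (mul_pos hk hPr)]
    exact hle τ hτ
  rw [← intervalIntegral.integral_const_mul]
  calc ∫ τ in r..s, k * P r * (√(P τ ^ 2 - P r ^ 2))⁻¹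
      ≤ ∫ τ in r..s, P r * P' τ / (P τ * √(P τ ^ 2 - P r ^ 2)) :=
        integral_mono_on_of_le_Ioo hrs.le (hint.const_mul _) hφint hle
    _ = arccos (P r / P s) := hφ
    _ ≤ π / 2 := arccos_le_pi_div_two.2 (div_nonneg hPr.le (hPr.trans (hgt s ⟨hrs, le_rfl⟩)).le)

end LogDerivBound

theorem mul_sinh_pow_mul_integral_inv_sqrt_le {m : ℕ} (hm : m ≠ 0) {r s : ℝ} (hr : 0 < r)
    (hrs : r < s) :
    m * sinh r ^ m * ∫ τ in r..s, (√((sinh τ ^ m) ^ 2 - (sinh r ^ m) ^ 2))⁻¹ ≤ π / 2 := by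
  refine mul_integral_inv_sqrt_sq_sub_sq_le (P := fun τ => sinh τ ^ m) hrs
    (Nat.cast_pos.2 (Nat.pos_of_ne_zero hm)) (pow_pos (sinh_pos_iff.2 hr) m)
    (continuous_sinh.pow m).continuousOn (fun τ _ => (hasDerivAt_sinh τ).pow m) (fun τ hτ => ?_)
    fun τ hτ => pow_lt_pow_left₀ (sinh_lt_sinh.2 hτ.1) (sinh_pos_iff.2 hr).le hm
  have hτ : 0 ≤ sinh τ ^ (m - 1) := pow_nonneg (sinh_pos_iff.2 (hr.trans hτ.1)).le _
  calc (m : ℝ) * sinh τ ^ m = m * sinh τ ^ (m - 1) * sinh τ := by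
        rw [mul_assoc, pow_sub_one_mul hm]
    _ ≤ m * sinh τ ^ (m - 1) * cosh τ := by gcongr; exact (sinh_lt_cosh τ).le

/-- In `ℍⁿ × ℝ` (`n ≥ 2`), the profile function of the rotational
half-catenoid over the geodesic sphere of radius `r > 0`,
`a(s) = sinh^{n-1}(r) ∫_r^s (sinh^{2n-2}τ - sinh^{2n-2}r)^{-1/2} dτ`,
satisfies `0 ≤ a(s) ≤ π/(2(n-1))` for all `s > r`; hence the rotational
catenoid `Σ_r` (obtained by reflecting the half-catenoid) is contained in a
horizontal slab of width `π/(n-1)`. -/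
theorem stmt_19 (n : ℕ) (hn : 2 ≤ n) (r : ℝ) (hr : 0 < r) :
    ∀ s, r < s →
      0 ≤ (Real.sinh r) ^ (n - 1) *
          (∫ τ in r..s,
            (Real.sqrt ((Real.sinh τ) ^ (2 * n - 2) - (Real.sinh r) ^ (2 * n - 2)))⁻¹) ∧
      (Real.sinh r) ^ (n - 1) *
          (∫ τ in r..s,
            (Real.sqrt ((Real.sinh τ) ^ (2 * n - 2) - (Real.sinh r) ^ (2 * n - 2)))⁻¹)
        ≤ Real.pi / (2 * ((n : ℝ) - 1)) := by
  intro s hrs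
  have hsq : ∀ τ, sinh τ ^ (2 * n - 2) = (sinh τ ^ (n - 1)) ^ 2 := fun τ => by
    rw [← pow_mul]; congr 1; omega
  have hcast : (n : ℝ) - 1 = ((n - 1 : ℕ) : ℝ) := by rw [Nat.cast_sub (by omega), Nat.cast_one]
  have hsinh : 0 < sinh r := sinh_pos_iff.2 hr
  simp only [hsq]
  refine ⟨mul_nonneg (by positivity) (integral_nonneg hrs.le fun τ _ => by positivity), ?_⟩
  have := mul_sinh_pow_mul_integral_inv_sqrt_le (m := n - 1) (by omega) hr hrs
  rw [hcast, le_div_iff₀ (mul_pos two_pos (Nat.cast_pos.2 (by omega)))]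
  linarith
end
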